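/- In every execution of the online collaborative caching algorithm on a request multiset V, the total caching cost paid by the algorithm is at most the total credit of the requests: Σ_{w∈W, w≠r} f_w ≤ Σ_{v∈V} ĉ(v), where W is the final cache set and for each request v the credit ĉ(v) equals f_w − p(w) + d(w,v) if v caused the content to be cached at a new node w (with p the potentials just before v arrived), and ĉ(v) = d(W_v, v) otherwise, W_v being the cache set when v was processed. -/

import Mathlib

open Finset

/-- The setting of the online collaborative caching problem: a finite set `X` of nodes
(base stations together with the root `r` representing the Internet), a pseudometric
UA-cost `d` satisfying the triangle inequality, and nonnegative caching costs `f`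
with `f r = 0` (the root always holds the content). -/
structure CachingSetting (X : Type*) [Fintype X] where
  d : X → X → ℝ
  f : X → ℝ
  r : X
  d_nonneg : ∀ x y, 0 ≤ d x y
  d_self : ∀ x, d x x = 0
  d_symm : ∀ x y, d x y = d y x
  d_triangle : ∀ x y z, d x z ≤ d x y + d y z
  f_nonneg : ∀ k, 0 ≤ f k
  f_root : f r = 0

namespace CachingSetting

variable {X : Type*} [Fintype X] [DecidableEq X] (S : CachingSetting X)

/-- UA cost of serving a request at `v` from the nearest node of the cache set `W`:
`D W v = min_{k ∈ W} d k v`. -/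
noncomputable def D (W : Finset X) (v : X) : ℝ :=
  if h : W.Nonempty then W.inf' h (fun k => S.d k v) else 0

/-- Potential of node `k` with respect to the cache set `W` and the first `j`
requests of the request sequence `v`:
`pot v W j k = ∑_{i < j} max(D W (v i) − d k (v i), 0)`. -/
noncomputable def pot (v : ℕ → X) (W : Finset X) (j : ℕ) (k : X) : ℝ :=
  ∑ i ∈ Finset.range j, max (S.D W (v i) - S.d k (v i)) 0

/-- One step of the online algorithm on request `v i`, turning the cache set `W`
into `W'`.  After updating the potentials (they become the potentials with respect
to `W` and the first `i + 1` requests), either all potentials are at most the caching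
costs and no new cache is opened, or the content is cached at a maximizer `w` of
`p(k) − f k` with `p(w) − f w > 0`. -/
def Step (v : ℕ → X) (i : ℕ) (W W' : Finset X) : Prop :=
  ((∀ k, S.pot v W (i + 1) k ≤ S.f k) ∧ W' = W) ∨
    (∃ w, (∀ k, S.pot v W (i + 1) k - S.f k ≤ S.pot v W (i + 1) w - S.f w) ∧
      S.f w < S.pot v W (i + 1) w ∧ W' = insert w W)

/-- `IsExecution S n v Ws` says that `Ws j` is the cache set maintained by the online
algorithm after fully processing the first `j` of the `n` requests `v 0, v 1, …`
(initially the cache set is `{r}`); ties may be broken arbitrarily. -/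
def IsExecution (n : ℕ) (v : ℕ → X) (Ws : ℕ → Finset X) : Prop :=
  Ws 0 = {S.r} ∧ ∀ i < n, S.Step v i (Ws i) (Ws (i + 1))

/-- One step of the online algorithm on request `v i`, together with the credit `c`
assigned to the request: `c = f w − p(w) + d(w, v i)` if the request causes the
content to be cached at a new node `w` (with `p` the potentials just before the
request arrived), and `c = d(W, v i)` otherwise (`W` then being the cache set when
the request is processed). -/
def StepWithCredit (v : ℕ → X) (i : ℕ) (W W' : Finset X) (c : ℝ) : Prop :=
  ((∀ k, S.pot v W (i + 1) k ≤ S.f k) ∧ W' = W ∧ c = S.D W (v i)) ∨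
    (∃ w, (∀ k, S.pot v W (i + 1) k - S.f k ≤ S.pot v W (i + 1) w - S.f w) ∧
      S.f w < S.pot v W (i + 1) w ∧ W' = insert w W ∧
      c = S.f w - S.pot v W i w + S.d w (v i))

/-- `IsExecutionWithCredits S n v Ws c` says that `Ws j` is the cache set maintained
by the online algorithm after fully processing the first `j` of the `n` requests
`v 0, v 1, …` (initially `{r}`), and `c i` is the credit of request `v i`; ties may
be broken arbitrarily. -/
def IsExecutionWithCredits (n : ℕ) (v : ℕ → X) (Ws : ℕ → Finset X) (c : ℕ → ℝ) : Prop :=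
  Ws 0 = {S.r} ∧ ∀ i < n, S.StepWithCredit v i (Ws i) (Ws (i + 1)) (c i)

end CachingSetting

/-!
Credit argument. For a list `k₁, …, kₘ` of prospective caches, let the chain potential be the sum
of the potentials of `kᵢ` with respect to the cache set enlarged by `k₁, …, kᵢ₋₁`. One more
request `u` raises it by at most `d(W, u)`: the potential gained by `k₁` plus the UA cost from `W ∪ {k₁}`
is at most `d(W, u)`, and the rest is an induction along the list. Hence, for every list, the
chain potential plus the caching cost paid so far never exceeds the credits collected so far:
a request that does not open a cache earns exactly `d(W, u)`, while a request opening `w` earns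
`f w − p(w) + d(w, u)`, which pays for `w` and for moving `w` from the head of the chain into
the cache set. The empty list gives the theorem.
-/

namespace CachingSetting

variable {X : Type*} [Fintype X] (S : CachingSetting X)

lemma D_nonneg (W : Finset X) (u : X) : 0 ≤ S.D W u := by
  unfold D
  split
  · exact le_inf' _ _ fun k _ => S.d_nonneg k u
  · exact le_rfl

lemma D_le_dist {W : Finset X} {k : X} (hk : k ∈ W) (u : X) : S.D W u ≤ S.d k u := by
  unfold D
  rw [dif_pos ⟨k, hk⟩]
  exact inf'_le _ hk

lemma pot_zero (v : ℕ → X) (W : Finset X) (k : X) : S.pot v W 0 k = 0 :=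
  sum_range_zero _

lemma pot_succ (v : ℕ → X) (W : Finset X) (j : ℕ) (k : X) :
    S.pot v W (j + 1) k = S.pot v W j k + max (S.D W (v j) - S.d k (v j)) 0 :=
  sum_range_succ _ _

variable [DecidableEq X]

lemma D_insert {W : Finset X} (hW : W.Nonempty) (k u : X) :
    S.D (insert k W) u = min (S.d k u) (S.D W u) := by
  unfold D
  rw [dif_pos (insert_nonempty k W), dif_pos hW, inf'_insert]

lemma max_sub_dist_add_D_insert_le {W : Finset X} (hW : W.Nonempty) (k u : X) :
    max (S.D W u - S.d k u) 0 + S.D (insert k W) u ≤ S.D W u := by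
  rw [S.D_insert hW]
  rcases le_total (S.D W u) (S.d k u) with h | h
  · rw [max_eq_right (by linarith), min_eq_right h, zero_add]
  · rw [max_eq_left (by linarith), min_eq_left h, sub_add_cancel]

noncomputable def chainPot (v : ℕ → X) (j : ℕ) : Finset X → List X → ℝ
  | _, [] => 0
  | W, k :: L => S.pot v W j k + chainPot v j (insert k W) L

@[simp]
lemma chainPot_nil (v : ℕ → X) (j : ℕ) (W : Finset X) : S.chainPot v j W [] = 0 := by
  rw [chainPot]

lemma chainPot_zero (v : ℕ → X) (L : List X) (W : Finset X) : S.chainPot v 0 W L = 0 := by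
  induction L generalizing W with
  | nil => rfl
  | cons k L ih => rw [chainPot, pot_zero, ih, add_zero]

lemma chainPot_succ_le (v : ℕ → X) (j : ℕ) (L : List X) {W : Finset X} (hW : W.Nonempty) :
    S.chainPot v (j + 1) W L ≤ S.chainPot v j W L + S.D W (v j) := by
  induction L generalizing W with
  | nil => simpa using S.D_nonneg W (v j)
  | cons k L ih =>
    have hL := ih (insert_nonempty k W)
    have hk := S.max_sub_dist_add_D_insert_le hW k (v j)
    rw [chainPot, chainPot, pot_succ]
    linarith

lemma sum_erase_insert_le (W : Finset X) (w : X) :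
    ∑ k ∈ (insert w W).erase S.r, S.f k ≤ S.f w + ∑ k ∈ W.erase S.r, S.f k := by
  by_cases hw : w = S.r
  · rw [hw, erase_insert_eq_erase]
    linarith [S.f_nonneg S.r]
  rw [erase_insert_of_ne hw]
  by_cases hmem : w ∈ W.erase S.r
  · rw [insert_eq_of_mem hmem]
    linarith [S.f_nonneg w]
  · rw [sum_insert hmem]

variable {S} {n : ℕ} {v : ℕ → X} {Ws : ℕ → Finset X} {c : ℕ → ℝ}

lemma IsExecutionWithCredits.root_mem (hexec : S.IsExecutionWithCredits n v Ws c) :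
    ∀ j ≤ n, S.r ∈ Ws j := by
  obtain ⟨h0, hstep⟩ := hexec
  intro j
  induction j with
  | zero => exact fun _ => h0 ▸ mem_singleton_self S.r
  | succ j ih =>
    intro (hj : j < n)
    rcases hstep j hj with ⟨_, hW, _⟩ | ⟨w, _, _, hW, _⟩
    · exact hW ▸ ih hj.le
    · exact hW ▸ mem_insert_of_mem (ih hj.le)

lemma IsExecutionWithCredits.chainPot_add_cost_le (hexec : S.IsExecutionWithCredits n v Ws c) :
    ∀ j ≤ n, ∀ L : List X,
      S.chainPot v j (Ws j) L + ∑ k ∈ (Ws j).erase S.r, S.f k ≤ ∑ i ∈ range j, c i := by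
  intro j
  induction j with
  | zero =>
    intro _ L
    simp [hexec.1, chainPot_zero, erase_singleton]
  | succ j ih =>
    intro (hj : j < n) L
    have hne : (Ws j).Nonempty := ⟨S.r, hexec.root_mem j hj.le⟩
    rw [sum_range_succ]
    rcases hexec.2 j hj with ⟨_, hW, hc⟩ | ⟨w, _, _, hW, hc⟩
    · have hgain := S.chainPot_succ_le v j L hne
      have hprev := ih hj.le L
      rw [hW]
      linarith
    · have hgain := S.chainPot_succ_le v j L (insert_nonempty w (Ws j))
      have hD := S.D_le_dist (mem_insert_self w (Ws j)) (v j)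
      have hprev := ih hj.le (w :: L)
      have hcost := S.sum_erase_insert_le (Ws j) w
      rw [chainPot] at hprev
      rw [hW]
      linarith

end CachingSetting

/-- Lemma 4 of the paper: in every execution of the online algorithm on requests
`v 0, …, v (n-1)` with credits `c`, the total caching cost paid by the algorithm is
at most the total credit of the requests:
`∑_{w ∈ W, w ≠ r} f w ≤ ∑_{v ∈ V} ĉ(v)`, where `W = Ws n` is the final cache set. -/
theorem caching_cost_le_credit {X : Type*} [Fintype X] [DecidableEq X]
    (S : CachingSetting X) (n : ℕ) (v : ℕ → X) (Ws : ℕ → Finset X) (c : ℕ → ℝ)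
    (hexec : S.IsExecutionWithCredits n v Ws c) :
    ∑ w ∈ (Ws n).erase S.r, S.f w ≤ ∑ i ∈ Finset.range n, c i := by
  simpa using hexec.chainPot_add_cost_le n le_rfl []
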